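/- Let X be a quandle and R a congruence on X. Then the relation composite R ∘ ∼, given by x (R ∘ ∼) z iff ∃ y, x ∼ y ∧ R y z, is itself a congruence on X, and it is the smallest congruence on X containing both R and ∼. (Hence the effective closure of R corresponding to the reflection of quandles into trivial quandles is c_X(R) = R ∨ ∼_{Inn(X)} = R ∘ ∼_{Inn(X)}.) -/

import Mathlib

open Quandles

/-- The paper's (right-action) quandle operation `x ◃ y`, i.e. Mathlib's `y ◃ x`.
With this convention `x ▷ x = x`, `(x ▷ y) ▷⁻¹ y = x = (x ▷⁻¹ y) ▷ y`, and
both `▷` and `▷⁻¹` are right self-distributive. -/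
def rAct {Q : Type*} [Quandle Q] (x y : Q) : Q := y ◃ x

/-- The paper's (right-action) inverse quandle operation `x ◃⁻¹ y`, i.e. Mathlib's `y ◃⁻¹ x`. -/
def rInvAct {Q : Type*} [Quandle Q] (x y : Q) : Q := y ◃⁻¹ x

local infixl:65 " ▷ " => rAct
local infixl:65 " ▷⁻¹ " => rInvAct

/-- The orbit relation `∼` on a quandle: the equivalence relation generated by the
relation `{(a, b) | ∃ z, a ▷ z = b}`; `x ∼ y` iff `x` and `y` lie in the same
connected component (orbit under the inner automorphism group). -/
def orbitRel (Q : Type*) [Quandle Q] : Q → Q → Prop :=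
  Relation.EqvGen (fun a b => ∃ z : Q, a ▷ z = b)

/-- A congruence on a quandle: an equivalence relation compatible with both operations. -/
def IsCongruence {Q : Type*} [Quandle Q] (R : Q → Q → Prop) : Prop :=
  Equivalence R ∧
    ∀ a b c d : Q, R a b → R c d → R (a ▷ c) (b ▷ d) ∧ R (a ▷⁻¹ c) (b ▷⁻¹ d)

/-- The composite `R ∘ ∼` of a congruence `R` with the orbit congruence:
`x (R ∘ ∼) z` iff `∃ y, x ∼ y ∧ R y z`. -/
def orbComp {X : Type*} [Quandle X] (R : X → X → Prop) : X → X → Prop :=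
  fun x z => ∃ y, orbitRel X x y ∧ R y z

/-!
Right translations `x ↦ x ▷ u` generate `∼`, and a congruence `R` is preserved by them and by
their inverses. Pushing an `R`-related pair along a chain of generating steps shows that `R`
followed by `∼` is contained in `∼` followed by `R`. Two congruences commuting in this sense
compose to a congruence, which is then the join of the two.
-/

@[simp]
lemma rAct_rInvAct {Q : Type*} [Quandle Q] (x y : Q) : x ▷ y ▷⁻¹ y = x :=
  Rack.invAct_act_eq y x

@[simp]
lemma rInvAct_rAct {Q : Type*} [Quandle Q] (x y : Q) : x ▷⁻¹ y ▷ y = x :=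
  Rack.act_invAct_eq y x

namespace IsCongruence

variable {Q : Type*} [Quandle Q] {R S : Q → Q → Prop}

lemma comp (hS : IsCongruence S) (hR : IsCongruence R)
    (hcomm : Relation.Comp R S ≤ Relation.Comp S R) : IsCongruence (Relation.Comp S R) := by
  refine ⟨⟨fun x => ⟨x, hS.1.refl x, hR.1.refl x⟩, ?_, ?_⟩, ?_⟩
  · rintro x z ⟨y, hxy, hyz⟩
    exact hcomm z x ⟨y, hR.1.symm hyz, hS.1.symm hxy⟩
  · rintro x z x' ⟨y, hxy, hyz⟩ ⟨y', hzy', hy'x'⟩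
    obtain ⟨w, hyw, hwy'⟩ := hcomm y y' ⟨z, hyz, hzy'⟩
    exact ⟨w, hS.1.trans hxy hyw, hR.1.trans hwy' hy'x'⟩
  · rintro a b c d ⟨y, hay, hyb⟩ ⟨y', hcy', hy'd⟩
    exact ⟨⟨y ▷ y', (hS.2 a y c y' hay hcy').1, (hR.2 y b y' d hyb hy'd).1⟩,
      ⟨y ▷⁻¹ y', (hS.2 a y c y' hay hcy').2, (hR.2 y b y' d hyb hy'd).2⟩⟩

end IsCongruence

section orbitRel

variable {Q : Type*} [Quandle Q]

lemma orbitRel_equivalence : Equivalence (orbitRel Q) :=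
  Relation.EqvGen.is_equivalence _

lemma orbitRel_rAct (x u : Q) : orbitRel Q x (x ▷ u) :=
  Relation.EqvGen.rel _ _ ⟨u, rfl⟩

lemma orbitRel_rInvAct (x u : Q) : orbitRel Q x (x ▷⁻¹ u) :=
  orbitRel_equivalence.symm (Relation.EqvGen.rel _ _ ⟨u, rInvAct_rAct x u⟩)

lemma isCongruence_orbitRel : IsCongruence (orbitRel Q) := by
  refine ⟨orbitRel_equivalence, fun a b c d hab _ => ⟨?_, ?_⟩⟩
  · exact orbitRel_equivalence.trans (orbitRel_equivalence.symm (orbitRel_rAct a c))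
      (orbitRel_equivalence.trans hab (orbitRel_rAct b d))
  · exact orbitRel_equivalence.trans (orbitRel_equivalence.symm (orbitRel_rInvAct a c))
      (orbitRel_equivalence.trans hab (orbitRel_rInvAct b d))

lemma IsCongruence.comp_orbitRel_le {R : Q → Q → Prop} (hR : IsCongruence R) :
    Relation.Comp R (orbitRel Q) ≤ Relation.Comp (orbitRel Q) R := by
  rintro x z ⟨y, hxy, hyz⟩
  rw [orbitRel, ← Relation.EqvGen.reflTransGen_symmGen] at hyz
  induction hyz with
  | refl => exact ⟨x, orbitRel_equivalence.refl x, hxy⟩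
  | tail _ hstep ih =>
    obtain ⟨w, hxw, hw⟩ := ih
    rcases hstep with ⟨u, rfl⟩ | ⟨u, rfl⟩
    · exact ⟨w ▷ u, orbitRel_equivalence.trans hxw (orbitRel_rAct w u),
        (hR.2 _ _ u u hw (hR.1.refl u)).1⟩
    · refine ⟨w ▷⁻¹ u, orbitRel_equivalence.trans hxw (orbitRel_rInvAct w u), ?_⟩
      simpa using (hR.2 _ _ u u hw (hR.1.refl u)).2

end orbitRel

/-- For a congruence `R` on a quandle `X`, the composite `R ∘ ∼` is itself a congruence,
and it is the smallest congruence containing both `R` and `∼`; hence the effective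
closure of `R` is `c_X(R) = R ∨ ∼ = R ∘ ∼`. -/
theorem orbComp_is_effective_closure {X : Type*} [Quandle X]
    (R : X → X → Prop) (hR : IsCongruence R) :
    IsCongruence (orbComp R) ∧
    (∀ x y : X, R x y → orbComp R x y) ∧
    (∀ x y : X, orbitRel X x y → orbComp R x y) ∧
    (∀ T : X → X → Prop, IsCongruence T → (∀ x y, R x y → T x y) →
      (∀ x y, orbitRel X x y → T x y) → ∀ x y, orbComp R x y → T x y) := by
  refine ⟨isCongruence_orbitRel.comp hR hR.comp_orbitRel_le, fun x y h => ?_,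
    fun x y h => ?_, ?_⟩
  · exact ⟨x, orbitRel_equivalence.refl x, h⟩
  · exact ⟨y, h, hR.1.refl y⟩
  · rintro T hT hRT hOT x z ⟨y, hxy, hyz⟩
    exact hT.1.trans (hOT x y hxy) (hRT y z hyz)
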